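/- Let k ≥ 1, α ∈ [0,1), θ ∈ Δ([k]). Let P⁽¹⁾ be a nonzero measure on 𝒳₁⁽¹⁾ × … × 𝒳ₖ⁽¹⁾ and P⁽²⁾ a nonzero measure on 𝒳₁⁽²⁾ × … × 𝒳ₖ⁽²⁾, and let their direct sum P⁽¹⁾ ⊕ P⁽²⁾ be the measure on (𝒳₁⁽¹⁾⊔𝒳₁⁽²⁾) × … × (𝒳ₖ⁽¹⁾⊔𝒳ₖ⁽²⁾) which agrees with P⁽¹⁾ on the embedded set 𝒳₁⁽¹⁾ × … × 𝒳ₖ⁽¹⁾, agrees with P⁽²⁾ on the embedded set 𝒳₁⁽²⁾ × … × 𝒳ₖ⁽²⁾, and is zero on all mixed tuples. Then 2^{(1−α)·H_{α,θ}(P⁽¹⁾⊕P⁽²⁾)} = 2^{(1−α)·H_{α,θ}(P⁽¹⁾)} + 2^{(1−α)·H_{α,θ}(P⁽²⁾)}. -/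

import Mathlib

open Finset

noncomputable section

/-- A probability distribution on a finite set. -/
def probVec {X : Type*} [Fintype X] (Q : X → ℝ) : Prop :=
  (∀ x, 0 ≤ Q x) ∧ ∑ x, Q x = 1

/-- Shannon entropy (base 2) of a measure on a finite set; `0 · log 0 = 0`. -/
def shEnt {X : Type*} [Fintype X] (Q : X → ℝ) : ℝ :=
  -∑ x, Q x * Real.logb 2 (Q x)

/-- Kullback–Leibler divergence (base 2); terms with `Q x = 0` vanish. -/
def klD {X : Type*} [Fintype X] (Q P : X → ℝ) : ℝ :=
  ∑ x, Q x * Real.logb 2 (Q x / P x)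

/-- `j`-th marginal of a measure on a finite product. -/
def marg {k : ℕ} {𝒳 : Fin k → Type*} [∀ j, Fintype (𝒳 j)] [∀ j, DecidableEq (𝒳 j)]
    (P : (∀ j, 𝒳 j) → ℝ) (j : Fin k) : 𝒳 j → ℝ :=
  fun a => ∑ x : ∀ i, 𝒳 i, if x j = a then P x else 0

/-- The functional `H_{α,θ}(P)`. -/
def Hat {k : ℕ} {𝒳 : Fin k → Type*} [∀ j, Fintype (𝒳 j)] [∀ j, DecidableEq (𝒳 j)]
    (α : ℝ) (θ : Fin k → ℝ) (P : (∀ j, 𝒳 j) → ℝ) : ℝ :=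
  sSup { v : ℝ | ∃ Q : (∀ j, 𝒳 j) → ℝ, probVec Q ∧ (∀ x, P x = 0 → Q x = 0) ∧
    v = (∑ j, θ j * shEnt (marg Q j)) - α / (1 - α) * klD Q P }

/-- Rényi entropy of order `α` of a measure on a finite set. -/
def renyiEnt {X : Type*} [Fintype X] (α : ℝ) (μ : X → ℝ) : ℝ :=
  (1 / (1 - α)) * Real.logb 2 (∑ x, μ x ^ α)


set_option linter.unusedSectionVars false
set_option linter.unusedVariables false
set_option maxHeartbeats 1000000


lemma mul_log_ge {q : ℝ} (hq : 0 ≤ q) : q - 1 ≤ q * Real.log q := by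
  rcases eq_or_lt_of_le hq with h | h
  · simp [← h]
  · have h1 : Real.log q⁻¹ ≤ q⁻¹ - 1 := Real.log_le_sub_one_of_pos (by positivity)
    rw [Real.log_inv] at h1
    have h2 : q * (1 - q⁻¹) ≤ q * Real.log q := by
      apply mul_le_mul_of_nonneg_left _ hq; linarith
    have h3 : q * (1 - q⁻¹) = q - 1 := by field_simp
    linarith
lemma log2_big : (1:ℝ)/2 ≤ Real.log 2 := by nlinarith [Real.log_two_gt_d9]
lemma log2_pos : (0:ℝ) < Real.log 2 := by linarith [log2_big]

lemma mul_logb_ge {q : ℝ} (hq : 0 ≤ q) : -2 ≤ q * Real.logb 2 q := by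
  have h := mul_log_ge hq
  rw [Real.logb, ← mul_div_assoc, le_div_iff₀ log2_pos]
  nlinarith [log2_big, Real.log_le_sub_one_of_pos (by norm_num : (0:ℝ) < 2)]

lemma kl_term_ge {q p : ℝ} (hq : 0 ≤ q) (hp : 0 ≤ p) (hs : q ≠ 0 → p ≠ 0) :
    -2 * p ≤ q * Real.logb 2 (q / p) := by
  rcases eq_or_lt_of_le hq with h | h
  · simp [← h]; positivity
  · have hp' : 0 < p := lt_of_le_of_ne hp (Ne.symm (hs h.ne'))
    have h1 : Real.log (p / q) ≤ p / q - 1 := Real.log_le_sub_one_of_pos (by positivity)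
    have h2 : q - p ≤ q * Real.log (q / p) := by
      have h3 : q * (1 - p/q) ≤ q * Real.log (q/p) := by
        apply mul_le_mul_of_nonneg_left _ hq
        rw [Real.log_div h.ne' hp'.ne']
        rw [Real.log_div hp'.ne' h.ne'] at h1
        linarith
      have h4 : q * (1 - p/q) = q - p := by field_simp
      linarith
    rw [Real.logb, ← mul_div_assoc, le_div_iff₀ log2_pos]
    nlinarith [log2_big]

lemma mul_logb_mul {l q : ℝ} (hl : 0 ≤ l) (hq : 0 ≤ q) :
    (l * q) * Real.logb 2 (l * q) = l * (q * Real.logb 2 q) + q * (l * Real.logb 2 l) := by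
  rcases eq_or_lt_of_le hl with h | h
  · simp [← h]
  rcases eq_or_lt_of_le hq with h2 | h2
  · simp [← h2]
  rw [Real.logb_mul h.ne' h2.ne']; ring

lemma kl_term_split {l q p : ℝ} (hl : 0 ≤ l) (hq : 0 ≤ q) (hs : q ≠ 0 → p ≠ 0) :
    (l * q) * Real.logb 2 (l * q / p) = l * (q * Real.logb 2 (q / p)) + q * (l * Real.logb 2 l) := by
  rcases eq_or_lt_of_le hq with h2 | h2
  · simp [← h2]
  rcases eq_or_lt_of_le hl with h | h
  · simp [← h]
  have hp := hs h2.ne'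
  have he : l * q / p = l * (q / p) := by ring
  rw [he, Real.logb_mul h.ne' (div_ne_zero h2.ne' hp)]; ring
lemma gibbs_term {A s l : ℝ} (hA : 0 < A) (hs : 0 < s) (hl : 0 ≤ l) :
    l * Real.log A - l * Real.log l ≤ l * Real.log s + (A/s - l) := by
  rcases eq_or_lt_of_le hl with h | h
  · simp [← h]; positivity
  · have h1 : Real.log (A / (l * s)) ≤ A / (l * s) - 1 :=
      Real.log_le_sub_one_of_pos (by positivity)
    rw [Real.log_div hA.ne' (by positivity), Real.log_mul h.ne' hs.ne'] at h1
    have h2 : l * (Real.log A - (Real.log l + Real.log s)) ≤ l * (A / (l * s) - 1) :=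
      mul_le_mul_of_nonneg_left h1 hl
    have h3 : l * (A / (l * s) - 1) = A / s - l := by field_simp
    linarith [h2, h3.le]

/-- Gibbs inequality, base 2, two terms. -/
lemma gibbs2 {A B : ℝ} (hA : 0 < A) (hB : 0 < B) {l : ℝ} (hl0 : 0 ≤ l) (hl1 : l ≤ 1) :
    l * Real.logb 2 A + (1-l) * Real.logb 2 B
      - (l * Real.logb 2 l + (1-l) * Real.logb 2 (1-l)) ≤ Real.logb 2 (A + B) := by
  have hs : 0 < A + B := by linarith
  have t1 := gibbs_term hA hs hl0
  have t2 := gibbs_term hB hs (by linarith : (0:ℝ) ≤ 1 - l)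
  have key : l * Real.log A + (1-l) * Real.log B
      - (l * Real.log l + (1-l) * Real.log (1-l)) ≤ Real.log (A + B) := by
    have : A / (A+B) + B / (A+B) = 1 := by field_simp
    nlinarith
  simp only [Real.logb]
  calc l * (Real.log A / Real.log 2) + (1 - l) * (Real.log B / Real.log 2) -
      (l * (Real.log l / Real.log 2) + (1 - l) * (Real.log (1 - l) / Real.log 2))
      = (l * Real.log A + (1-l) * Real.log B
      - (l * Real.log l + (1-l) * Real.log (1-l))) / Real.log 2 := by ring
    _ ≤ Real.log (A + B) / Real.log 2 := by
        exact (div_le_div_iff_of_pos_right log2_pos).mpr key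


lemma gibbs2_eq {A B : ℝ} (hA : 0 < A) (hB : 0 < B) :
    (A/(A+B)) * Real.logb 2 A + (1-(A/(A+B))) * Real.logb 2 B
      - ((A/(A+B)) * Real.logb 2 (A/(A+B)) + (1-(A/(A+B))) * Real.logb 2 (1-(A/(A+B))))
      = Real.logb 2 (A + B) := by
  have hs : 0 < A + B := by linarith
  have h1 : 1 - A/(A+B) = B/(A+B) := by field_simp; ring
  rw [h1, Real.logb_div hA.ne' hs.ne', Real.logb_div hB.ne' hs.ne']
  have h2 : A/(A+B) + B/(A+B) = 1 := by field_simp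
  ring_nf
  linear_combination (Real.logb 2 (A+B)) * h2

lemma keyIneq {t a b l : ℝ} (ht : 0 < t) (hl0 : 0 ≤ l) (hl1 : l ≤ 1) :
    l * a + (1-l) * b - (1/t) * (l * Real.logb 2 l + (1-l) * Real.logb 2 (1-l)) ≤
      (1/t) * Real.logb 2 ((2:ℝ) ^ (t*a) + (2:ℝ) ^ (t*b)) := by
  have hA : (0:ℝ) < (2:ℝ) ^ (t*a) := Real.rpow_pos_of_pos (by norm_num) _
  have hB : (0:ℝ) < (2:ℝ) ^ (t*b) := Real.rpow_pos_of_pos (by norm_num) _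
  have h := gibbs2 hA hB hl0 hl1
  rw [Real.logb_rpow (by norm_num) (by norm_num), Real.logb_rpow (by norm_num) (by norm_num)] at h
  have h2 := mul_le_mul_of_nonneg_left h (le_of_lt (by positivity : (0:ℝ) < 1/t))
  calc l * a + (1-l) * b - (1/t) * (l * Real.logb 2 l + (1-l) * Real.logb 2 (1-l))
      = (1/t) * (l * (t*a) + (1-l) * (t*b)
        - (l * Real.logb 2 l + (1-l) * Real.logb 2 (1-l))) := by field_simp
    _ ≤ (1/t) * Real.logb 2 ((2:ℝ) ^ (t*a) + (2:ℝ) ^ (t*b)) := h2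

lemma keyEq {t a b : ℝ} (ht : 0 < t) :
    ∀ l, l = (2:ℝ)^(t*a) / ((2:ℝ)^(t*a) + (2:ℝ)^(t*b)) →
    l * a + (1-l) * b - (1/t) * (l * Real.logb 2 l + (1-l) * Real.logb 2 (1-l)) =
      (1/t) * Real.logb 2 ((2:ℝ) ^ (t*a) + (2:ℝ) ^ (t*b)) := by
  intro l hl
  have hA : (0:ℝ) < (2:ℝ) ^ (t*a) := Real.rpow_pos_of_pos (by norm_num) _
  have hB : (0:ℝ) < (2:ℝ) ^ (t*b) := Real.rpow_pos_of_pos (by norm_num) _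
  have h := gibbs2_eq hA hB
  rw [Real.logb_rpow (by norm_num) (by norm_num), Real.logb_rpow (by norm_num) (by norm_num)] at h
  rw [hl]
  rw [← h]
  field_simp

section margs
variable {k : ℕ} {𝒵 : Fin k → Type} [∀ j, Fintype (𝒵 j)] [∀ j, DecidableEq (𝒵 j)]

lemma marg_nonneg {Q : (∀ j, 𝒵 j) → ℝ} (hQ : ∀ x, 0 ≤ Q x) (j : Fin k) (a : 𝒵 j) :
    0 ≤ marg Q j a := by
  apply Finset.sum_nonneg; intro x _; split <;> simp [hQ x]

lemma marg_sum (Q : (∀ j, 𝒵 j) → ℝ) (j : Fin k) : ∑ a, marg Q j a = ∑ x, Q x := by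
  unfold marg; rw [Finset.sum_comm]; simp

end margs

section pi
variable {k : ℕ} {𝒳 𝒴 : Fin k → Type}
  [∀ i, Fintype (𝒳 i)] [∀ i, DecidableEq (𝒳 i)]
  [∀ i, Fintype (𝒴 i)] [∀ i, DecidableEq (𝒴 i)]

def embL (a : ∀ i, 𝒳 i) : ∀ i, 𝒳 i ⊕ 𝒴 i := fun i => Sum.inl (a i)
def embR (b : ∀ i, 𝒴 i) : ∀ i, 𝒳 i ⊕ 𝒴 i := fun i => Sum.inr (b i)

lemma embL_inj : Function.Injective (embL (𝒳 := 𝒳) (𝒴 := 𝒴)) := by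
  intro a a' h; funext i; have := congrFun h i; simpa [embL] using this

lemma embR_inj : Function.Injective (embR (𝒳 := 𝒳) (𝒴 := 𝒴)) := by
  intro a a' h; funext i; have := congrFun h i; simpa [embR] using this

lemma embL_ne_embR (hk : 1 ≤ k) (a : ∀ i, 𝒳 i) (b : ∀ i, 𝒴 i) : embL a ≠ embR b := by
  intro h; have := congrFun h ⟨0, hk⟩; simp [embL, embR] at this

def pushL (Q : (∀ i, 𝒳 i) → ℝ) : (∀ i, 𝒳 i ⊕ 𝒴 i) → ℝ :=
  fun z => ∑ a, if embL a = z then Q a else 0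
def pushR (Q : (∀ i, 𝒴 i) → ℝ) : (∀ i, 𝒳 i ⊕ 𝒴 i) → ℝ :=
  fun z => ∑ b, if embR b = z then Q b else 0

lemma pushL_emb (Q : (∀ i, 𝒳 i) → ℝ) (a : ∀ i, 𝒳 i) :
    pushL (𝒴 := 𝒴) Q (embL a) = Q a := by
  unfold pushL; rw [Finset.sum_eq_single a] <;> simp +contextual [embL_inj.eq_iff]

lemma pushR_emb (Q : (∀ i, 𝒴 i) → ℝ) (b : ∀ i, 𝒴 i) :
    pushR (𝒳 := 𝒳) Q (embR b) = Q b := by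
  unfold pushR; rw [Finset.sum_eq_single b] <;> simp +contextual [embR_inj.eq_iff]

lemma pushL_not (Q : (∀ i, 𝒳 i) → ℝ) {z} (h : ¬∃ a, z = embL (𝒴 := 𝒴) a) :
    pushL Q z = 0 := by
  unfold pushL; apply Finset.sum_eq_zero; intro a _
  rw [if_neg]; intro he; exact h ⟨a, he.symm⟩

lemma pushR_not (Q : (∀ i, 𝒴 i) → ℝ) {z} (h : ¬∃ b, z = embR (𝒳 := 𝒳) b) :
    pushR Q z = 0 := by
  unfold pushR; apply Finset.sum_eq_zero; intro b _
  rw [if_neg]; intro he; exact h ⟨b, he.symm⟩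

lemma pushL_embR (hk : 1 ≤ k) (Q : (∀ i, 𝒳 i) → ℝ) (b : ∀ i, 𝒴 i) :
    pushL Q (embR b) = 0 :=
  pushL_not Q (by rintro ⟨a, ha⟩; exact embL_ne_embR hk a b ha.symm)

lemma pushR_embL (hk : 1 ≤ k) (Q : (∀ i, 𝒴 i) → ℝ) (a : ∀ i, 𝒳 i) :
    pushR Q (embL a) = 0 :=
  pushR_not Q (by rintro ⟨b, hb⟩; exact embL_ne_embR hk a b hb)

/-- Splitting a sum over the sum-product into left, right (mixed terms vanish). -/
lemma sum_split (hk : 1 ≤ k) (F : (∀ i, 𝒳 i ⊕ 𝒴 i) → ℝ)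
    (h0 : ∀ z, (¬∃ a, z = embL a) → (¬∃ b, z = embR b) → F z = 0) :
    ∑ z, F z = ∑ a, F (embL a) + ∑ b, F (embR b) := by
  have key : ∀ z : ∀ i, 𝒳 i ⊕ 𝒴 i,
      F z = (if z ∈ Finset.univ.image (embL (𝒳 := 𝒳) (𝒴 := 𝒴)) then F z else 0)
        + (if z ∈ Finset.univ.image (embR (𝒳 := 𝒳) (𝒴 := 𝒴)) then F z else 0) := by
    intro z
    by_cases h1 : ∃ a, z = embL a
    · obtain ⟨a, rfl⟩ := h1
      rw [if_pos (by simp [Finset.mem_image]), if_neg, add_zero]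
      simp only [Finset.mem_image, Finset.mem_univ, true_and]
      rintro ⟨b, hb⟩; exact embL_ne_embR hk a b hb.symm
    · by_cases h2 : ∃ b, z = embR b
      · obtain ⟨b, rfl⟩ := h2
        rw [if_neg, if_pos (by simp [Finset.mem_image]), zero_add]
        simp only [Finset.mem_image, Finset.mem_univ, true_and]
        rintro ⟨a, ha⟩; exact embL_ne_embR hk a b ha
      · rw [h0 z h1 h2, if_neg, if_neg, add_zero] <;>
        · simp only [Finset.mem_image, Finset.mem_univ, true_and]
          first
          | (rintro ⟨b, hb⟩; exact h2 ⟨b, hb.symm⟩)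
          | (rintro ⟨a, ha⟩; exact h1 ⟨a, ha.symm⟩)
  rw [Finset.sum_congr rfl (fun z _ => key z), Finset.sum_add_distrib]
  congr 1
  · rw [Finset.sum_ite_mem, Finset.univ_inter, Finset.sum_image (fun a _ a' _ h => embL_inj h)]
  · rw [Finset.sum_ite_mem, Finset.univ_inter, Finset.sum_image (fun a _ a' _ h => embR_inj h)]

lemma sum_pushL (Q : (∀ i, 𝒳 i) → ℝ) : ∑ z, pushL (𝒴 := 𝒴) Q z = ∑ a, Q a := by
  unfold pushL; rw [Finset.sum_comm]; simp

lemma sum_pushR (Q : (∀ i, 𝒴 i) → ℝ) : ∑ z, pushR (𝒳 := 𝒳) Q z = ∑ b, Q b := by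
  unfold pushR; rw [Finset.sum_comm]; simp

lemma marg_pushL_inl (Q : (∀ i, 𝒳 i) → ℝ) (j : Fin k) (u : 𝒳 j) :
    marg (pushL (𝒴 := 𝒴) Q) j (Sum.inl u) = marg Q j u := by
  unfold marg pushL
  have step : ∀ z : ∀ i, 𝒳 i ⊕ 𝒴 i,
      (if z j = Sum.inl u then (∑ a, if embL a = z then Q a else 0) else 0)
      = ∑ a, (if embL a = z then (if a j = u then Q a else 0) else 0) := by
    intro z
    split_ifs with h
    · apply Finset.sum_congr rfl; intro a _
      split_ifs with h2 h3
      · rfl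
      · exfalso; apply h3
        have : embL (𝒴 := 𝒴) a j = Sum.inl u := h2 ▸ h
        simpa [embL] using this
      · rfl
    · apply (Finset.sum_eq_zero _).symm; intro a _
      split_ifs with h2 h3
      · exfalso; apply h
        rw [← h2]; simp [embL, h3]
      · rfl
      · rfl
  rw [Finset.sum_congr rfl (fun z _ => step z), Finset.sum_comm]
  apply Finset.sum_congr rfl; intro a _
  rw [Finset.sum_ite_eq Finset.univ (embL a)]
  simp

lemma marg_pushL_inr (Q : (∀ i, 𝒳 i) → ℝ) (j : Fin k) (w : 𝒴 j) :
    marg (pushL (𝒴 := 𝒴) Q) j (Sum.inr w) = 0 := by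
  unfold marg
  apply Finset.sum_eq_zero; intro z _
  split_ifs with h
  · apply pushL_not; rintro ⟨a, rfl⟩; simp [embL] at h
  · rfl

lemma marg_pushR_inr (Q : (∀ i, 𝒴 i) → ℝ) (j : Fin k) (w : 𝒴 j) :
    marg (pushR (𝒳 := 𝒳) Q) j (Sum.inr w) = marg Q j w := by
  unfold marg pushR
  have step : ∀ z : ∀ i, 𝒳 i ⊕ 𝒴 i,
      (if z j = Sum.inr w then (∑ b, if embR b = z then Q b else 0) else 0)
      = ∑ b, (if embR b = z then (if b j = w then Q b else 0) else 0) := by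
    intro z
    split_ifs with h
    · apply Finset.sum_congr rfl; intro b _
      split_ifs with h2 h3
      · rfl
      · exfalso; apply h3
        have : embR (𝒳 := 𝒳) b j = Sum.inr w := h2 ▸ h
        simpa [embR] using this
      · rfl
    · apply (Finset.sum_eq_zero _).symm; intro b _
      split_ifs with h2 h3
      · exfalso; apply h
        rw [← h2]; simp [embR, h3]
      · rfl
      · rfl
  rw [Finset.sum_congr rfl (fun z _ => step z), Finset.sum_comm]
  apply Finset.sum_congr rfl; intro b _
  rw [Finset.sum_ite_eq Finset.univ (embR b)]
  simp

lemma marg_pushR_inl (Q : (∀ i, 𝒴 i) → ℝ) (j : Fin k) (u : 𝒳 j) :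
    marg (pushR (𝒳 := 𝒳) Q) j (Sum.inl u) = 0 := by
  unfold marg
  apply Finset.sum_eq_zero; intro z _
  split_ifs with h
  · apply pushR_not; rintro ⟨b, rfl⟩; simp [embR] at h
  · rfl

end pi
section margs2
variable {k : ℕ} {𝒵 : Fin k → Type} [∀ j, Fintype (𝒵 j)] [∀ j, DecidableEq (𝒵 j)]

/-- The objective functional. -/
def objF (α : ℝ) (θ : Fin k → ℝ) (Q P : (∀ j, 𝒵 j) → ℝ) : ℝ :=
  (∑ j, θ j * shEnt (marg Q j)) - α / (1 - α) * klD Q P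

/-- The feasible-value set. -/
def AS (α : ℝ) (θ : Fin k → ℝ) (P : (∀ j, 𝒵 j) → ℝ) : Set ℝ :=
  { v : ℝ | ∃ Q : (∀ j, 𝒵 j) → ℝ, probVec Q ∧ (∀ x, P x = 0 → Q x = 0) ∧ v = objF α θ Q P }

lemma shEnt_le (Q : (∀ j, 𝒵 j) → ℝ) (hQ : ∀ x, 0 ≤ Q x) (j : Fin k) :
    shEnt (marg Q j) ≤ 2 * (Fintype.card (𝒵 j) : ℝ) := by
  unfold shEnt
  have h : -(2 * (Fintype.card (𝒵 j) : ℝ)) ≤ ∑ a, marg Q j a * Real.logb 2 (marg Q j a) := by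
    calc -(2 * (Fintype.card (𝒵 j) : ℝ)) = ∑ _a : 𝒵 j, (-2 : ℝ) := by
          simp [Finset.sum_const, Finset.card_univ]; ring
      _ ≤ _ := Finset.sum_le_sum fun a _ => mul_logb_ge (marg_nonneg hQ j a)
  linarith

lemma klD_ge (Q P : (∀ j, 𝒵 j) → ℝ) (hQ : ∀ x, 0 ≤ Q x) (hP : ∀ x, 0 ≤ P x)
    (hs : ∀ x, P x = 0 → Q x = 0) :
    -(2 * ∑ x, P x) ≤ klD Q P := by
  unfold klD
  calc -(2 * ∑ x, P x) = ∑ x, -2 * P x := by rw [Finset.mul_sum, ← Finset.sum_neg_distrib]; congr 1; funext x; ring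
    _ ≤ _ := Finset.sum_le_sum fun x _ =>
        kl_term_ge (hQ x) (hP x) (fun hq hp => hq (hs x hp))

lemma objF_le {α : ℝ} (hα0 : 0 ≤ α) (hα1 : α < 1) {θ : Fin k → ℝ} (hθ : probVec θ)
    (P : (∀ j, 𝒵 j) → ℝ) (hP : ∀ x, 0 ≤ P x) {Q : (∀ j, 𝒵 j) → ℝ} (hQ : probVec Q)
    (hs : ∀ x, P x = 0 → Q x = 0) :
    objF α θ Q P ≤ (∑ j, θ j * (2 * (Fintype.card (𝒵 j) : ℝ)))
      + (α / (1-α)) * (2 * ∑ x, P x) := by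
  unfold objF
  have hc : 0 ≤ α / (1 - α) := div_nonneg hα0 (by linarith)
  have h1 : (∑ j, θ j * shEnt (marg Q j)) ≤ ∑ j, θ j * (2 * (Fintype.card (𝒵 j) : ℝ)) :=
    Finset.sum_le_sum fun j _ => mul_le_mul_of_nonneg_left (shEnt_le Q hQ.1 j) (hθ.1 j)
  have h2 := klD_ge Q P hQ.1 hP hs
  nlinarith [mul_le_mul_of_nonneg_left h2 hc]

lemma bddAS {α : ℝ} (hα0 : 0 ≤ α) (hα1 : α < 1) {θ : Fin k → ℝ} (hθ : probVec θ)
    (P : (∀ j, 𝒵 j) → ℝ) (hP : ∀ x, 0 ≤ P x) : BddAbove (AS α θ P) := by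
  refine ⟨(∑ j, θ j * (2 * (Fintype.card (𝒵 j) : ℝ))) + (α / (1-α)) * (2 * ∑ x, P x), ?_⟩
  rintro v ⟨Q, hQ, hs, rfl⟩
  exact objF_le hα0 hα1 hθ P hP hQ hs

lemma exists_feas (P : (∀ j, 𝒵 j) → ℝ) (hPne : P ≠ 0) :
    ∃ Q : (∀ j, 𝒵 j) → ℝ, probVec Q ∧ (∀ x, P x = 0 → Q x = 0) := by
  obtain ⟨x0, hx0⟩ := Function.ne_iff.mp hPne
  refine ⟨fun x => if x = x0 then 1 else 0, ⟨fun x => by positivity, by simp⟩, fun x hx => ?_⟩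
  simp only []; rw [if_neg]; rintro rfl; exact hx0 hx

lemma nonemptyAS (α : ℝ) (θ : Fin k → ℝ) (P : (∀ j, 𝒵 j) → ℝ) (hPne : P ≠ 0) :
    (AS α θ P).Nonempty := by
  obtain ⟨Q, hQ, hs⟩ := exists_feas P hPne
  exact ⟨objF α θ Q P, Q, hQ, hs, rfl⟩
end margs2
section pi2
variable {k : ℕ} {𝒳 𝒴 : Fin k → Type}
  [∀ i, Fintype (𝒳 i)] [∀ i, DecidableEq (𝒳 i)]
  [∀ i, Fintype (𝒴 i)] [∀ i, DecidableEq (𝒴 i)]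

/-- The mixture of two distributions on the direct-sum index set. -/
def comb (l : ℝ) (Q1 : (∀ i, 𝒳 i) → ℝ) (Q2 : (∀ i, 𝒴 i) → ℝ) : (∀ i, 𝒳 i ⊕ 𝒴 i) → ℝ :=
  fun z => l * pushL Q1 z + (1 - l) * pushR Q2 z

lemma comb_embL (hk : 1 ≤ k) (l) (Q1 : (∀ i, 𝒳 i) → ℝ) (Q2 : (∀ i, 𝒴 i) → ℝ) (a) :
    comb l Q1 Q2 (embL a) = l * Q1 a := by
  simp [comb, pushL_emb, pushR_embL hk]

lemma comb_embR (hk : 1 ≤ k) (l) (Q1 : (∀ i, 𝒳 i) → ℝ) (Q2 : (∀ i, 𝒴 i) → ℝ) (b) :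
    comb l Q1 Q2 (embR b) = (1 - l) * Q2 b := by
  simp [comb, pushR_emb, pushL_embR hk]

lemma comb_mixed (l) (Q1 : (∀ i, 𝒳 i) → ℝ) (Q2 : (∀ i, 𝒴 i) → ℝ) {z}
    (h1 : ¬∃ a, z = embL a) (h2 : ¬∃ b, z = embR b) :
    comb l Q1 Q2 z = 0 := by
  simp [comb, pushL_not _ h1, pushR_not _ h2]

lemma comb_probVec (hk : 1 ≤ k) {l : ℝ} (hl0 : 0 ≤ l) (hl1 : l ≤ 1)
    {Q1 : (∀ i, 𝒳 i) → ℝ} {Q2 : (∀ i, 𝒴 i) → ℝ} (hQ1 : probVec Q1) (hQ2 : probVec Q2) :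
    probVec (comb l Q1 Q2) := by
  constructor
  · intro z
    have h1 : 0 ≤ pushL (𝒴 := 𝒴) Q1 z := Finset.sum_nonneg fun a _ => by
      split <;> simp [hQ1.1 a]
    have h2 : 0 ≤ pushR (𝒳 := 𝒳) Q2 z := Finset.sum_nonneg fun b _ => by
      split <;> simp [hQ2.1 b]
    have h3 : (0:ℝ) ≤ 1 - l := by linarith
    exact add_nonneg (mul_nonneg hl0 h1) (mul_nonneg h3 h2)
  · unfold comb
    rw [Finset.sum_add_distrib, ← Finset.mul_sum, ← Finset.mul_sum, sum_pushL, sum_pushR,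
      hQ1.2, hQ2.2]
    ring

lemma comb_supp (hk : 1 ≤ k) (l : ℝ)
    {Q1 P1 : (∀ i, 𝒳 i) → ℝ} {Q2 P2 : (∀ i, 𝒴 i) → ℝ}
    (hs1 : ∀ a, P1 a = 0 → Q1 a = 0) (hs2 : ∀ b, P2 b = 0 → Q2 b = 0)
    {S : (∀ i, 𝒳 i ⊕ 𝒴 i) → ℝ}
    (hS1 : ∀ a, S (embL a) = P1 a) (hS2 : ∀ b, S (embR b) = P2 b) :
    ∀ z, S z = 0 → comb l Q1 Q2 z = 0 := by
  intro z hz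
  by_cases h1 : ∃ a, z = embL a
  · obtain ⟨a, rfl⟩ := h1
    rw [comb_embL hk, hs1 a (by rw [← hS1 a]; exact hz), mul_zero]
  by_cases h2 : ∃ b, z = embR b
  · obtain ⟨b, rfl⟩ := h2
    rw [comb_embR hk, hs2 b (by rw [← hS2 b]; exact hz), mul_zero]
  exact comb_mixed l Q1 Q2 h1 h2

lemma marg_comb (l : ℝ) (Q1 : (∀ i, 𝒳 i) → ℝ) (Q2 : (∀ i, 𝒴 i) → ℝ) (j : Fin k)
    (v : 𝒳 j ⊕ 𝒴 j) :
    marg (comb l Q1 Q2) j v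
      = l * marg (pushL Q1) j v + (1 - l) * marg (pushR Q2) j v := by
  unfold marg comb
  rw [Finset.mul_sum, Finset.mul_sum, ← Finset.sum_add_distrib]
  apply Finset.sum_congr rfl; intro z _
  split_ifs <;> simp

lemma shEnt_marg_comb {l : ℝ} (hl0 : 0 ≤ l) (hl1 : l ≤ 1)
    {Q1 : (∀ i, 𝒳 i) → ℝ} {Q2 : (∀ i, 𝒴 i) → ℝ} (hQ1 : probVec Q1) (hQ2 : probVec Q2)
    (j : Fin k) :
    shEnt (marg (comb l Q1 Q2) j)
      = l * shEnt (marg Q1 j) + (1-l) * shEnt (marg Q2 j)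
        - (l * Real.logb 2 l + (1-l) * Real.logb 2 (1-l)) := by
  have hl1' : (0:ℝ) ≤ 1 - l := by linarith
  unfold shEnt
  rw [Fintype.sum_sum_type]
  have hL : ∀ u : 𝒳 j, marg (comb l Q1 Q2) j (Sum.inl u) = l * marg Q1 j u := by
    intro u; rw [marg_comb, marg_pushL_inl, marg_pushR_inl, mul_zero, add_zero]
  have hR : ∀ w : 𝒴 j, marg (comb l Q1 Q2) j (Sum.inr w) = (1-l) * marg Q2 j w := by
    intro w; rw [marg_comb, marg_pushR_inr, marg_pushL_inr, mul_zero, zero_add]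
  have e1 : ∑ u : 𝒳 j, marg (comb l Q1 Q2) j (Sum.inl u)
        * Real.logb 2 (marg (comb l Q1 Q2) j (Sum.inl u))
      = l * (∑ u, marg Q1 j u * Real.logb 2 (marg Q1 j u)) + l * Real.logb 2 l := by
    calc ∑ u : 𝒳 j, marg (comb l Q1 Q2) j (Sum.inl u)
        * Real.logb 2 (marg (comb l Q1 Q2) j (Sum.inl u))
        = ∑ u : 𝒳 j, (l * (marg Q1 j u * Real.logb 2 (marg Q1 j u))
            + marg Q1 j u * (l * Real.logb 2 l)) := by
          apply Finset.sum_congr rfl; intro u _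
          rw [hL u, mul_logb_mul hl0 (marg_nonneg hQ1.1 j u)]
      _ = l * (∑ u, marg Q1 j u * Real.logb 2 (marg Q1 j u)) + l * Real.logb 2 l := by
          rw [Finset.sum_add_distrib, ← Finset.mul_sum, ← Finset.sum_mul, marg_sum, hQ1.2,
            one_mul]
  have e2 : ∑ w : 𝒴 j, marg (comb l Q1 Q2) j (Sum.inr w)
        * Real.logb 2 (marg (comb l Q1 Q2) j (Sum.inr w))
      = (1-l) * (∑ w, marg Q2 j w * Real.logb 2 (marg Q2 j w)) + (1-l) * Real.logb 2 (1-l) := by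
    calc ∑ w : 𝒴 j, marg (comb l Q1 Q2) j (Sum.inr w)
        * Real.logb 2 (marg (comb l Q1 Q2) j (Sum.inr w))
        = ∑ w : 𝒴 j, ((1-l) * (marg Q2 j w * Real.logb 2 (marg Q2 j w))
            + marg Q2 j w * ((1-l) * Real.logb 2 (1-l))) := by
          apply Finset.sum_congr rfl; intro w _
          rw [hR w, mul_logb_mul hl1' (marg_nonneg hQ2.1 j w)]
      _ = _ := by
          rw [Finset.sum_add_distrib, ← Finset.mul_sum, ← Finset.sum_mul, marg_sum, hQ2.2,
            one_mul]
  rw [e1, e2]; ring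

lemma klD_comb (hk : 1 ≤ k) {l : ℝ} (hl0 : 0 ≤ l) (hl1 : l ≤ 1)
    {Q1 P1 : (∀ i, 𝒳 i) → ℝ} {Q2 P2 : (∀ i, 𝒴 i) → ℝ}
    (hQ1 : probVec Q1) (hQ2 : probVec Q2)
    (hs1 : ∀ a, P1 a = 0 → Q1 a = 0) (hs2 : ∀ b, P2 b = 0 → Q2 b = 0)
    {S : (∀ i, 𝒳 i ⊕ 𝒴 i) → ℝ}
    (hS1 : ∀ a, S (embL a) = P1 a) (hS2 : ∀ b, S (embR b) = P2 b) :
    klD (comb l Q1 Q2) S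
      = l * klD Q1 P1 + (1-l) * klD Q2 P2
        + (l * Real.logb 2 l + (1-l) * Real.logb 2 (1-l)) := by
  have hl1' : (0:ℝ) ≤ 1 - l := by linarith
  unfold klD
  rw [sum_split hk _ (fun z h1 h2 => by rw [comb_mixed l Q1 Q2 h1 h2, zero_mul])]
  have e1 : ∑ a, comb l Q1 Q2 (embL a) * Real.logb 2 (comb l Q1 Q2 (embL a) / S (embL a))
      = l * (∑ a, Q1 a * Real.logb 2 (Q1 a / P1 a)) + l * Real.logb 2 l := by
    calc ∑ a, comb l Q1 Q2 (embL a) * Real.logb 2 (comb l Q1 Q2 (embL a) / S (embL a))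
        = ∑ a, (l * (Q1 a * Real.logb 2 (Q1 a / P1 a)) + Q1 a * (l * Real.logb 2 l)) := by
          apply Finset.sum_congr rfl; intro a _
          rw [comb_embL hk, hS1 a,
            kl_term_split hl0 (hQ1.1 a) (fun hq hp => hq (hs1 a hp))]
      _ = _ := by
          rw [Finset.sum_add_distrib, ← Finset.mul_sum, ← Finset.sum_mul, hQ1.2, one_mul]
  have e2 : ∑ b, comb l Q1 Q2 (embR b) * Real.logb 2 (comb l Q1 Q2 (embR b) / S (embR b))
      = (1-l) * (∑ b, Q2 b * Real.logb 2 (Q2 b / P2 b)) + (1-l) * Real.logb 2 (1-l) := by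
    calc ∑ b, comb l Q1 Q2 (embR b) * Real.logb 2 (comb l Q1 Q2 (embR b) / S (embR b))
        = ∑ b, ((1-l) * (Q2 b * Real.logb 2 (Q2 b / P2 b)) + Q2 b * ((1-l) * Real.logb 2 (1-l))) := by
          apply Finset.sum_congr rfl; intro b _
          rw [comb_embR hk, hS2 b,
            kl_term_split hl1' (hQ2.1 b) (fun hq hp => hq (hs2 b hp))]
      _ = _ := by
          rw [Finset.sum_add_distrib, ← Finset.mul_sum, ← Finset.sum_mul, hQ2.2, one_mul]
  rw [e1, e2]; ring

lemma objF_comb (hk : 1 ≤ k) {α : ℝ} (hα0 : 0 ≤ α) (hα1 : α < 1)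
    {θ : Fin k → ℝ} (hθ : probVec θ) {l : ℝ} (hl0 : 0 ≤ l) (hl1 : l ≤ 1)
    {Q1 P1 : (∀ i, 𝒳 i) → ℝ} {Q2 P2 : (∀ i, 𝒴 i) → ℝ}
    (hQ1 : probVec Q1) (hQ2 : probVec Q2)
    (hs1 : ∀ a, P1 a = 0 → Q1 a = 0) (hs2 : ∀ b, P2 b = 0 → Q2 b = 0)
    {S : (∀ i, 𝒳 i ⊕ 𝒴 i) → ℝ}
    (hS1 : ∀ a, S (embL a) = P1 a) (hS2 : ∀ b, S (embR b) = P2 b) :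
    objF α θ (comb l Q1 Q2) S
      = l * objF α θ Q1 P1 + (1-l) * objF α θ Q2 P2
        - (1/(1-α)) * (l * Real.logb 2 l + (1-l) * Real.logb 2 (1-l)) := by
  unfold objF
  rw [klD_comb hk hl0 hl1 hQ1 hQ2 hs1 hs2 hS1 hS2]
  have hsum : ∑ j, θ j * shEnt (marg (comb l Q1 Q2) j)
      = l * (∑ j, θ j * shEnt (marg Q1 j)) + (1-l) * (∑ j, θ j * shEnt (marg Q2 j))
        - (l * Real.logb 2 l + (1-l) * Real.logb 2 (1-l)) := by
    calc ∑ j, θ j * shEnt (marg (comb l Q1 Q2) j)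
        = ∑ j, (l * (θ j * shEnt (marg Q1 j)) + (1-l) * (θ j * shEnt (marg Q2 j))
            - θ j * (l * Real.logb 2 l + (1-l) * Real.logb 2 (1-l))) := by
          apply Finset.sum_congr rfl; intro j _
          rw [shEnt_marg_comb hl0 hl1 hQ1 hQ2 j]; ring
      _ = _ := by
          rw [Finset.sum_sub_distrib, Finset.sum_add_distrib, ← Finset.mul_sum,
            ← Finset.mul_sum, ← Finset.sum_mul, hθ.2, one_mul]
  rw [hsum]
  have h1a : (1:ℝ) - α ≠ 0 := by linarith
  have hc : 1 + α / (1-α) = 1/(1-α) := by field_simp; ring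
  linear_combination (-(l * Real.logb 2 l + (1-l) * Real.logb 2 (1-l))) * hc

end pi2

section mainsec
variable {k : ℕ} {𝒳 𝒴 : Fin k → Type}
  [∀ i, Fintype (𝒳 i)] [∀ i, DecidableEq (𝒳 i)]
  [∀ i, Fintype (𝒴 i)] [∀ i, DecidableEq (𝒴 i)]

theorem stmt7' (hk : 1 ≤ k)
    (α : ℝ) (hα : α ∈ Set.Ico (0 : ℝ) 1) (θ : Fin k → ℝ) (hθ : probVec θ)
    (P1 : (∀ i, 𝒳 i) → ℝ) (P2 : (∀ i, 𝒴 i) → ℝ)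
    (hP10 : ∀ x, 0 ≤ P1 x) (hP20 : ∀ y, 0 ≤ P2 y)
    (hP1ne : P1 ≠ 0) (hP2ne : P2 ≠ 0)
    (S : (∀ i, 𝒳 i ⊕ 𝒴 i) → ℝ)
    (hS1 : ∀ a : ∀ i, 𝒳 i, S (fun i => Sum.inl (a i)) = P1 a)
    (hS2 : ∀ b : ∀ i, 𝒴 i, S (fun i => Sum.inr (b i)) = P2 b)
    (hS0 : ∀ x : ∀ i, 𝒳 i ⊕ 𝒴 i,
      (¬ ∃ a : ∀ i, 𝒳 i, ∀ i, x i = Sum.inl (a i)) →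
      (¬ ∃ b : ∀ i, 𝒴 i, ∀ i, x i = Sum.inr (b i)) → S x = 0) :
    (2 : ℝ) ^ ((1 - α) * Hat α θ S) =
      (2 : ℝ) ^ ((1 - α) * Hat α θ P1) + (2 : ℝ) ^ ((1 - α) * Hat α θ P2) := by
  classical
  obtain ⟨hα0, hα1⟩ := hα
  have ht : (0:ℝ) < 1 - α := by linarith
  set t : ℝ := 1 - α with ht_def
  -- adapters
  have hS1' : ∀ a, S (embL a) = P1 a := hS1
  have hS2' : ∀ b, S (embR b) = P2 b := hS2
  have hS0' : ∀ z, (¬∃ a, z = embL (𝒳 := 𝒳) (𝒴 := 𝒴) a) → (¬∃ b, z = embR b) → S z = 0 := by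
    intro z h1 h2
    refine hS0 z ?_ ?_
    · rintro ⟨a, ha⟩; exact h1 ⟨a, funext ha⟩
    · rintro ⟨b, hb⟩; exact h2 ⟨b, funext hb⟩
  have hSnn : ∀ z, 0 ≤ S z := by
    intro z
    by_cases h1 : ∃ a, z = embL (𝒳 := 𝒳) (𝒴 := 𝒴) a
    · obtain ⟨a, rfl⟩ := h1; rw [hS1' a]; exact hP10 a
    by_cases h2 : ∃ b, z = embR (𝒳 := 𝒳) (𝒴 := 𝒴) b
    · obtain ⟨b, rfl⟩ := h2; rw [hS2' b]; exact hP20 b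
    · rw [hS0' z h1 h2]
  have hSne : S ≠ 0 := by
    obtain ⟨a0, ha0⟩ := Function.ne_iff.mp hP1ne
    apply Function.ne_iff.mpr
    refine ⟨embL a0, ?_⟩
    rw [hS1' a0]; simpa using ha0
  -- the suprema
  set s1 : ℝ := Hat α θ P1 with hs1def
  set s2 : ℝ := Hat α θ P2 with hs2def
  have hHat1 : s1 = sSup (AS α θ P1) := rfl
  have hHat2 : s2 = sSup (AS α θ P2) := rfl
  have hHatS : Hat α θ S = sSup (AS α θ S) := rfl
  have hbdd1 : BddAbove (AS α θ P1) := bddAS hα0 hα1 hθ P1 hP10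
  have hbdd2 : BddAbove (AS α θ P2) := bddAS hα0 hα1 hθ P2 hP20
  have hbddS : BddAbove (AS α θ S) := bddAS hα0 hα1 hθ S hSnn
  have hne1 : (AS α θ P1).Nonempty := nonemptyAS α θ P1 hP1ne
  have hne2 : (AS α θ P2).Nonempty := nonemptyAS α θ P2 hP2ne
  have hneS : (AS α θ S).Nonempty := nonemptyAS α θ S hSne
  set T : ℝ := (1/t) * Real.logb 2 ((2:ℝ) ^ (t*s1) + (2:ℝ) ^ (t*s2)) with hTdef
  -- upper bound
  have hub : ∀ v ∈ AS α θ S, v ≤ T := by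
    rintro v ⟨Q, hQ, hsupp, rfl⟩
    set l : ℝ := ∑ a, Q (embL a) with hldef
    have hl0 : 0 ≤ l := Finset.sum_nonneg fun a _ => hQ.1 _
    have hr0 : 0 ≤ ∑ b, Q (embR b) := Finset.sum_nonneg fun b _ => hQ.1 _
    have hsplit : l + ∑ b, Q (embR b) = 1 := by
      rw [hldef, ← sum_split hk Q (fun z h1 h2 => hsupp z (hS0' z h1 h2))]
      exact hQ.2
    have hl1 : l ≤ 1 := by linarith
    obtain ⟨D1, hD1, hD1s⟩ := exists_feas P1 hP1ne
    obtain ⟨D2, hD2, hD2s⟩ := exists_feas P2 hP2ne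
    set Q1 : (∀ i, 𝒳 i) → ℝ := if l = 0 then D1 else fun a => Q (embL a) / l with hQ1def
    set Q2 : (∀ i, 𝒴 i) → ℝ := if l = 1 then D2 else fun b => Q (embR b) / (1 - l)
      with hQ2def
    have hQL0 : l = 0 → ∀ a, Q (embL a) = 0 := by
      intro h0 a
      have hz : ∑ a, Q (embL a) = 0 := by rw [← hldef]; exact h0
      exact (Finset.sum_eq_zero_iff_of_nonneg (fun a _ => hQ.1 (embL a))).mp hz a
        (Finset.mem_univ a)
    have hQR0 : l = 1 → ∀ b, Q (embR b) = 0 := by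
      intro h1 b
      have hz : ∑ b, Q (embR b) = 0 := by rw [h1] at hsplit; linarith
      exact (Finset.sum_eq_zero_iff_of_nonneg (fun b _ => hQ.1 (embR b))).mp hz b
        (Finset.mem_univ b)
    have hQ1good : probVec Q1 ∧ ∀ a, P1 a = 0 → Q1 a = 0 := by
      by_cases h0 : l = 0
      · rw [hQ1def, if_pos h0]; exact ⟨hD1, hD1s⟩
      · rw [hQ1def, if_neg h0]
        refine ⟨⟨fun a => div_nonneg (hQ.1 _) hl0, ?_⟩, fun a hpa => ?_⟩
        · rw [← Finset.sum_div, ← hldef, div_self h0]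
        · rw [hsupp (embL a) (by rw [hS1' a]; exact hpa), zero_div]
    have hQ2good : probVec Q2 ∧ ∀ b, P2 b = 0 → Q2 b = 0 := by
      by_cases h1 : l = 1
      · rw [hQ2def, if_pos h1]; exact ⟨hD2, hD2s⟩
      · have h1l : 1 - l ≠ 0 := fun h => h1 (by linarith)
        have h1l' : 0 ≤ 1 - l := by linarith
        rw [hQ2def, if_neg h1]
        refine ⟨⟨fun b => div_nonneg (hQ.1 _) h1l', ?_⟩, fun b hpb => ?_⟩
        · rw [← Finset.sum_div, show ∑ b, Q (embR b) = 1 - l by linarith, div_self h1l]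
        · rw [hsupp (embR b) (by rw [hS2' b]; exact hpb), zero_div]
    have hQeq : Q = comb l Q1 Q2 := by
      funext z
      by_cases h1 : ∃ a, z = embL (𝒳 := 𝒳) (𝒴 := 𝒴) a
      · obtain ⟨a, rfl⟩ := h1
        rw [comb_embL hk]
        by_cases h0 : l = 0
        · rw [hQL0 h0 a, h0, zero_mul]
        · rw [hQ1def, if_neg h0, mul_div_cancel₀ _ h0]
      by_cases h2 : ∃ b, z = embR (𝒳 := 𝒳) (𝒴 := 𝒴) b
      · obtain ⟨b, rfl⟩ := h2
        rw [comb_embR hk]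
        by_cases h1' : l = 1
        · rw [hQR0 h1' b, h1', sub_self, zero_mul]
        · have h1l : 1 - l ≠ 0 := fun h => h1' (by linarith)
          rw [hQ2def, if_neg h1', mul_div_cancel₀ _ h1l]
      · rw [hsupp z (hS0' z h1 h2), comb_mixed l Q1 Q2 h1 h2]
    rw [hQeq,
      objF_comb hk hα0 hα1 hθ hl0 hl1 hQ1good.1 hQ2good.1 hQ1good.2 hQ2good.2 hS1' hS2']
    have hv1 : objF α θ Q1 P1 ≤ s1 :=
      hHat1 ▸ le_csSup hbdd1 ⟨Q1, hQ1good.1, hQ1good.2, rfl⟩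
    have hv2 : objF α θ Q2 P2 ≤ s2 :=
      hHat2 ▸ le_csSup hbdd2 ⟨Q2, hQ2good.1, hQ2good.2, rfl⟩
    calc l * objF α θ Q1 P1 + (1-l) * objF α θ Q2 P2
          - (1/(1-α)) * (l * Real.logb 2 l + (1-l) * Real.logb 2 (1-l))
        ≤ l * s1 + (1-l) * s2
          - (1/t) * (l * Real.logb 2 l + (1-l) * Real.logb 2 (1-l)) := by
          have e1 := mul_le_mul_of_nonneg_left hv1 hl0
          have e2 := mul_le_mul_of_nonneg_left hv2 (by linarith : (0:ℝ) ≤ 1 - l)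
          rw [← ht_def]; linarith
      _ ≤ T := keyIneq ht hl0 hl1
  have hSle : Hat α θ S ≤ T := by rw [hHatS]; exact csSup_le hneS hub
  -- lower bound
  have hmem : ∀ v1 ∈ AS α θ P1, ∀ v2 ∈ AS α θ P2,
      (1/t) * Real.logb 2 ((2:ℝ) ^ (t*v1) + (2:ℝ) ^ (t*v2)) ∈ AS α θ S := by
    rintro v1 ⟨Q1, hQ1, hsp1, rfl⟩ v2 ⟨Q2, hQ2, hsp2, rfl⟩
    set a : ℝ := objF α θ Q1 P1
    set b : ℝ := objF α θ Q2 P2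
    have hA : (0:ℝ) < (2:ℝ) ^ (t*a) := Real.rpow_pos_of_pos (by norm_num) _
    have hB : (0:ℝ) < (2:ℝ) ^ (t*b) := Real.rpow_pos_of_pos (by norm_num) _
    set l : ℝ := (2:ℝ)^(t*a) / ((2:ℝ)^(t*a) + (2:ℝ)^(t*b)) with hldef
    have hl0 : 0 ≤ l := by positivity
    have hl1 : l ≤ 1 := by
      rw [hldef, div_le_one (by positivity)]; linarith
    refine ⟨comb l Q1 Q2, comb_probVec hk hl0 hl1 hQ1 hQ2,
      comb_supp hk l hsp1 hsp2 hS1' hS2', ?_⟩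
    rw [objF_comb hk hα0 hα1 hθ hl0 hl1 hQ1 hQ2 hsp1 hsp2 hS1' hS2', ← ht_def]
    exact (keyEq ht l hldef).symm
  have hTle : T ≤ Hat α θ S := by
    by_contra hcon
    push_neg at hcon
    set ε : ℝ := (T - Hat α θ S)/2 with hεdef
    have hε : 0 < ε := by rw [hεdef]; linarith
    obtain ⟨v1, hv1mem, hv1⟩ := exists_lt_of_lt_csSup hne1
      (show s1 - ε < sSup (AS α θ P1) by rw [← hHat1]; linarith)
    obtain ⟨v2, hv2mem, hv2⟩ := exists_lt_of_lt_csSup hne2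
      (show s2 - ε < sSup (AS α θ P2) by rw [← hHat2]; linarith)
    have hw := hmem v1 hv1mem v2 hv2mem
    have hwle : (1/t) * Real.logb 2 ((2:ℝ) ^ (t*v1) + (2:ℝ) ^ (t*v2)) ≤ Hat α θ S := by
      rw [hHatS]; exact le_csSup hbddS hw
    -- T - ε ≤ w
    have e1 : (2:ℝ) ^ (t*s1 + -(t*ε)) ≤ (2:ℝ) ^ (t*v1) := by
      apply Real.rpow_le_rpow_of_exponent_le one_le_two
      nlinarith
    have e2 : (2:ℝ) ^ (t*s2 + -(t*ε)) ≤ (2:ℝ) ^ (t*v2) := by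
      apply Real.rpow_le_rpow_of_exponent_le one_le_two
      nlinarith
    have hsum : (2:ℝ) ^ (-(t*ε)) * ((2:ℝ) ^ (t*s1) + (2:ℝ) ^ (t*s2))
        ≤ (2:ℝ) ^ (t*v1) + (2:ℝ) ^ (t*v2) := by
      rw [Real.rpow_add (by norm_num : (0:ℝ) < 2) (t*s1) (-(t*ε))] at e1
      rw [Real.rpow_add (by norm_num : (0:ℝ) < 2) (t*s2) (-(t*ε))] at e2
      nlinarith [Real.rpow_pos_of_pos (show (0:ℝ) < 2 by norm_num) (t*s1),
        Real.rpow_pos_of_pos (show (0:ℝ) < 2 by norm_num) (t*s2)]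
    have hlog : -(t*ε) + Real.logb 2 ((2:ℝ) ^ (t*s1) + (2:ℝ) ^ (t*s2))
        ≤ Real.logb 2 ((2:ℝ) ^ (t*v1) + (2:ℝ) ^ (t*v2)) := by
      have hpos1 : (0:ℝ) < (2:ℝ) ^ (-(t*ε)) * ((2:ℝ) ^ (t*s1) + (2:ℝ) ^ (t*s2)) := by
        have := Real.rpow_pos_of_pos (show (0:ℝ) < 2 by norm_num) (t*s1)
        have := Real.rpow_pos_of_pos (show (0:ℝ) < 2 by norm_num) (t*s2)
        have := Real.rpow_pos_of_pos (show (0:ℝ) < 2 by norm_num) (-(t*ε))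
        positivity
      have h := Real.logb_le_logb_of_le (show (1:ℝ) < 2 by norm_num) hpos1 hsum
      rw [Real.logb_mul (by positivity) (by positivity),
        Real.logb_rpow (by norm_num) (by norm_num)] at h
      exact h
    have : T - ε ≤ (1/t) * Real.logb 2 ((2:ℝ) ^ (t*v1) + (2:ℝ) ^ (t*v2)) := by
      rw [hTdef]
      have h := mul_le_mul_of_nonneg_left hlog (le_of_lt (show (0:ℝ) < 1/t by positivity))
      have heq : (1/t) * (-(t*ε) + Real.logb 2 ((2:ℝ) ^ (t*s1) + (2:ℝ) ^ (t*s2)))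
          = (1/t) * Real.logb 2 ((2:ℝ) ^ (t*s1) + (2:ℝ) ^ (t*s2)) - ε := by
        field_simp
        ring
      linarith [heq ▸ h]
    linarith
  have hfinal : Hat α θ S = T := le_antisymm hSle hTle
  rw [hfinal]
  have hpos : (0:ℝ) < (2:ℝ) ^ (t*s1) + (2:ℝ) ^ (t*s2) := by
    have := Real.rpow_pos_of_pos (show (0:ℝ) < 2 by norm_num) (t*s1)
    have := Real.rpow_pos_of_pos (show (0:ℝ) < 2 by norm_num) (t*s2)
    linarith
  have hTval : t * T = Real.logb 2 ((2:ℝ) ^ (t*s1) + (2:ℝ) ^ (t*s2)) := by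
    rw [hTdef]
    field_simp
  rw [show (1 - α) * T = t * T from rfl, hTval,
    Real.rpow_logb (by norm_num) (by norm_num) hpos]
end mainsec


/-- `2^{(1-α)H_{α,θ}}` is additive under direct sums.  The direct sum
`S = P1 ⊕ P2` on `(𝒳₁⊔𝒴₁) × … × (𝒳ₖ⊔𝒴ₖ)` is characterised by agreeing with `P1` on
the embedded `𝒳`-tuples, with `P2` on the embedded `𝒴`-tuples, and vanishing on all
mixed tuples. -/
theorem stmt7 {k : ℕ} (hk : 1 ≤ k) (𝒳 𝒴 : Fin k → Type)
    [∀ i, Fintype (𝒳 i)] [∀ i, DecidableEq (𝒳 i)]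
    [∀ i, Fintype (𝒴 i)] [∀ i, DecidableEq (𝒴 i)]
    (α : ℝ) (hα : α ∈ Set.Ico (0 : ℝ) 1) (θ : Fin k → ℝ) (hθ : probVec θ)
    (P1 : (∀ i, 𝒳 i) → ℝ) (P2 : (∀ i, 𝒴 i) → ℝ)
    (hP10 : ∀ x, 0 ≤ P1 x) (hP20 : ∀ y, 0 ≤ P2 y)
    (hP1ne : P1 ≠ 0) (hP2ne : P2 ≠ 0)
    (S : (∀ i, 𝒳 i ⊕ 𝒴 i) → ℝ)
    (hS1 : ∀ a : ∀ i, 𝒳 i, S (fun i => Sum.inl (a i)) = P1 a)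
    (hS2 : ∀ b : ∀ i, 𝒴 i, S (fun i => Sum.inr (b i)) = P2 b)
    (hS0 : ∀ x : ∀ i, 𝒳 i ⊕ 𝒴 i,
      (¬ ∃ a : ∀ i, 𝒳 i, ∀ i, x i = Sum.inl (a i)) →
      (¬ ∃ b : ∀ i, 𝒴 i, ∀ i, x i = Sum.inr (b i)) → S x = 0) :
    (2 : ℝ) ^ ((1 - α) * Hat α θ S) =
      (2 : ℝ) ^ ((1 - α) * Hat α θ P1) + (2 : ℝ) ^ ((1 - α) * Hat α θ P2) := by
  exact stmt7' hk α hα θ hθ P1 P2 hP10 hP20 hP1ne hP2ne S hS1 hS2 hS0
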